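/- Let M be a positive integer, S ⊆ (1/M)ℤ/ℤ with S = -S, and suppose the density ρ_a(x) = ∑_{k∈S} a(k) ω(k)^{1/2} e^{-2πikx} (for x ∈ ℤ/MℤM, a: S → U(1) an elementary phase form, ω(k) > 0) takes only rational values. Then S is invariant under the action of the Galois group Gal(ℚ[ζ_M]/ℚ) ≅ (ℤ/Mℤ)×, i.e., for every k ∈ S and every unit s ∈ (ℤ/Mℤ)×, sk ∈ S. -/

import Mathlib

/-!
The Fourier coefficient of `ρ_a` at `t`, i.e. `a(t) ω(t)^{1/2}` for `t ∈ S` and `0` otherwise, is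
`M⁻¹ ∑_x ρ_a(x) ζ^{tx}` with `ζ = e^{2πi/M}`. For fixed `k`, rationality of `ρ_a` makes
`P(X) = ∑_x ρ_a(x) X^{kx}` a rational polynomial, and the coefficients at `k` and `s k` are
`P(ζ)/M` and `P(ζ^s)/M`. Since `ζ` and `ζ^s` are both primitive `M`-th roots of unity, they
share the minimal polynomial `Φ_M` over `ℚ`, so `P(ζ^s) = 0` forces `P(ζ) = 0`, contradicting
`a(k) ω(k)^{1/2} ≠ 0`.
-/

/-- The density `ρ_a(x) = ∑_{k ∈ S} a(k) ω(k)^{1/2} e^{-2πi k x / M}` on `ℤ/Mℤ`,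
where `S ⊆ (1/M)ℤ/ℤ` is identified with a subset of `ℤ/Mℤ`. -/
noncomputable def rhoDensity (M : ℕ) (S : Finset (ZMod M)) (a : ZMod M → ℂ)
    (ω : ZMod M → ℝ) (x : ZMod M) : ℂ :=
  ∑ k ∈ S, a k * ((ω k ^ ((1 : ℝ) / 2) : ℝ) : ℂ) *
    Complex.exp (-(2 * Real.pi * Complex.I * ((k.val * x.val : ℕ) : ℂ)) / (M : ℂ))

open Polynomial

theorem IsPrimitiveRoot.aeval_eq_zero_iff {K : Type*} [Field K] [CharZero K] {n : ℕ}
    (hn : 0 < n) {μ ν : K} (hμ : IsPrimitiveRoot μ n) (hν : IsPrimitiveRoot ν n) (P : ℚ[X]) :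
    aeval μ P = 0 ↔ aeval ν P = 0 := by
  rw [← minpoly.dvd_iff, ← minpoly.dvd_iff, ← cyclotomic_eq_minpoly_rat hμ hn,
    ← cyclotomic_eq_minpoly_rat hν hn]

namespace ZMod

variable {N : ℕ} [NeZero N]

theorem stdAddChar_natCast_eq_pow (n : ℕ) :
    stdAddChar (n : ZMod N) = stdAddChar (1 : ZMod N) ^ n := by
  rw [← AddChar.map_nsmul_eq_pow, nsmul_one]

theorem isPrimitiveRoot_stdAddChar_one : IsPrimitiveRoot (stdAddChar (1 : ZMod N)) N := by
  have h := stdAddChar_coe (N := N) 1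
  rw [Int.cast_one] at h
  rw [h]
  convert Complex.isPrimitiveRoot_exp N (NeZero.ne N) using 2
  push_cast
  ring

theorem sum_stdAddChar_mul_dft (Φ : ZMod N → ℂ) (k : ZMod N) :
    ∑ j, stdAddChar (k * j) * 𝓕 Φ j = N * Φ k := by
  have h := congrFun (dft.symm_apply_apply Φ) k
  rw [invDFT_apply, smul_eq_mul, inv_mul_eq_iff_eq_mul₀ (NeZero.ne (N : ℂ))] at h
  simpa [mul_comm k] using h

theorem sum_stdAddChar_unit_mul_eq_zero_iff (q : ZMod N → ℚ) (u : (ZMod N)ˣ) (k : ZMod N) :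
    ∑ j, stdAddChar ((u : ZMod N) * k * j) * (q j : ℂ) = 0 ↔
      ∑ j, stdAddChar (k * j) * (q j : ℂ) = 0 := by
  set ζ := stdAddChar (1 : ZMod N)
  set P : ℚ[X] := ∑ j, C (q j) * X ^ (k * j).val
  have hP : ∀ m : ℕ,
      aeval (ζ ^ m) P = ∑ j, stdAddChar ((m : ZMod N) * (k * j)) * (q j : ℂ) := by
    intro m
    simp only [P, map_sum, map_mul, aeval_C, map_pow, aeval_X, ← pow_mul]
    refine Finset.sum_congr rfl fun j _ ↦ ?_
    have hcast : ((m * (k * j).val : ℕ) : ZMod N) = m * (k * j) := by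
      push_cast [natCast_zmod_val]
      rfl
    rw [← hcast, stdAddChar_natCast_eq_pow, mul_comm]
    simp [ζ]
  have hζu : IsPrimitiveRoot (ζ ^ (u : ZMod N).val) N :=
    isPrimitiveRoot_stdAddChar_one.pow_of_coprime _ (val_coe_unit_coprime u)
  have h := IsPrimitiveRoot.aeval_eq_zero_iff (NeZero.pos N) hζu
    isPrimitiveRoot_stdAddChar_one P
  have hζ : aeval ζ P = ∑ j, stdAddChar (k * j) * (q j : ℂ) := by simpa using hP 1
  rw [hP, hζ] at h
  simpa [mul_assoc] using h

end ZMod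

open scoped ZMod

theorem rhoDensity_eq_dft {M : ℕ} [NeZero M] (S : Finset (ZMod M)) (a : ZMod M → ℂ)
    (ω : ZMod M → ℝ) :
    rhoDensity M S a ω =
      𝓕 (fun k ↦ if k ∈ S then a k * ((ω k ^ ((1 : ℝ) / 2) : ℝ) : ℂ) else 0) := by
  ext x
  rw [rhoDensity, ZMod.dft_apply]
  simp only [smul_eq_mul, mul_ite, mul_zero, Finset.sum_ite_mem, Finset.univ_inter]
  refine Finset.sum_congr rfl fun k _ ↦ ?_
  have hexp : ZMod.stdAddChar (-(k * x)) =
      Complex.exp (-(2 * Real.pi * Complex.I * ((k.val * x.val : ℕ) : ℂ)) / (M : ℂ)) := by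
    rw [show -(k * x) = ((-(k.val * x.val : ℕ) : ℤ) : ZMod M) by simp, ZMod.stdAddChar_coe]
    push_cast
    ring_nf
  rw [hexp, mul_comm]

theorem statement18_general (M : ℕ) (hM : 0 < M) (S : Finset (ZMod M))
    (a : ZMod M → ℂ)
    (ha : ∀ k ∈ S, ‖a k‖ = 1)
    (ω : ZMod M → ℝ) (hω : ∀ k ∈ S, 0 < ω k)
    (hrat : ∀ x : ZMod M, ∃ q : ℚ, rhoDensity M S a ω x = (q : ℂ)) :
    ∀ k ∈ S, ∀ s : (ZMod M)ˣ, (s : ZMod M) * k ∈ S := by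
  intro k hk s
  by_contra hsk
  have : NeZero M := ⟨hM.ne'⟩
  choose q hq using hrat
  set Φ : ZMod M → ℂ := fun k ↦ if k ∈ S then a k * ((ω k ^ ((1 : ℝ) / 2) : ℝ) : ℂ) else 0
  have hcoeff : ∀ t, ∑ j, ZMod.stdAddChar (t * j) * (q j : ℂ) = M * Φ t := fun t ↦ by
    simp only [← hq, rhoDensity_eq_dft, ZMod.sum_stdAddChar_mul_dft, Φ]
  have hΦk : Φ k ≠ 0 := by
    have hak : a k ≠ 0 := norm_ne_zero_iff.mp (by rw [ha k hk]; exact one_ne_zero)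
    have hωk : ((ω k ^ ((1 : ℝ) / 2) : ℝ) : ℂ) ≠ 0 :=
      Complex.ofReal_ne_zero.mpr (Real.rpow_pos_of_pos (hω k hk) _).ne'
    simpa [Φ, hk] using mul_ne_zero hak hωk
  have hsΦ : ∑ j, ZMod.stdAddChar ((s : ZMod M) * k * j) * (q j : ℂ) = 0 := by
    rw [hcoeff, show Φ (s * k) = 0 from if_neg hsk, mul_zero]
  rw [ZMod.sum_stdAddChar_unit_mul_eq_zero_iff, hcoeff] at hsΦ
  exact mul_ne_zero (Nat.cast_ne_zero.mpr hM.ne') hΦk hsΦ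

/-- Let `S ⊆ (1/M)ℤ/ℤ` with `S = -S` and let
`ρ_a(x) = ∑_{k∈S} a(k) ω(k)^{1/2} e^{-2πikx}` (for `x ∈ ℤ/Mℤ`, `a` an elementary
phase form, `ω(k) > 0` on `S`) take only rational values.  Then `S` is invariant under
the Galois action of `Gal(ℚ[ζ_M]/ℚ) ≅ (ℤ/Mℤ)ˣ`: for every `k ∈ S` and every unit
`s ∈ (ℤ/Mℤ)ˣ`, also `s·k ∈ S`. -/
theorem statement18 (M : ℕ) (hM : 0 < M) (S : Finset (ZMod M))
    (hS : ∀ k ∈ S, -k ∈ S)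
    (a : ZMod M → ℂ)
    (ha : ∀ k ∈ S, ‖a k‖ = 1)
    (ha0 : (0 : ZMod M) ∈ S → a 0 = 1)
    (haconj : ∀ k ∈ S, a (-k) = starRingEnd ℂ (a k))
    (ω : ZMod M → ℝ) (hω : ∀ k ∈ S, 0 < ω k)
    (hrat : ∀ x : ZMod M, ∃ q : ℚ, rhoDensity M S a ω x = (q : ℂ)) :
    ∀ k ∈ S, ∀ s : (ZMod M)ˣ, (s : ZMod M) * k ∈ S :=
  statement18_general M hM S a ha ω hω hrat
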